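/- arXiv:1401.3585 — 3 statements merged into one kernel-verified Lean document; each statement's English description precedes it below -/
import Mathlib

section
/- Let I be a countable set, M a smooth manifold, and for each i ∈ I let M_i be a smooth manifold with dim(M_i) < dim(M) and f_i : M_i → M a smooth map. Then the union of the images f_i(M_i) over all i ∈ I is not equal to M. -/
/-!
A `C¹` map is locally Lipschitz, so it does not increase Hausdorff dimension. Reading `f i` in
charts, each chart domain of `N i` is mapped into a chart of `M` onto a set of Hausdorff
dimension at most `m i ≤ n - 1`; since `N i` is covered by countably many chart domains and `I`
is countable, the union of the images meets a chart domain of `M` in a set of dimension at most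
`n - 1`. But that chart domain is sent onto an open subset of `ℝⁿ`, of dimension `n`.
-/

open Set Manifold Module
open scoped ENNReal

theorem ContDiffOn.dimH_image_le_of_isOpen {E F : Type*} [NormedAddCommGroup E] [NormedSpace ℝ E]
    [FiniteDimensional ℝ E] [NormedAddCommGroup F] [NormedSpace ℝ F] {f : E → F} {s t : Set E}
    (hf : ContDiffOn ℝ 1 f s) (hs : IsOpen s) (ht : t ⊆ s) : dimH (f '' t) ≤ dimH t :=
  dimH_image_le_of_locally_lipschitzOn fun x hx =>
    let ⟨C, u, hu, hlip⟩ :=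
      ((hf x (ht hx)).contDiffAt (hs.mem_nhds (ht hx))).exists_lipschitzOnWith
    ⟨C, u, nhdsWithin_le_nhds hu, hlip⟩

section

variable {E H : Type*} [NormedAddCommGroup E] [NormedSpace ℝ E] [TopologicalSpace H]
  {I : ModelWithCorners ℝ E H} {N : Type*} [TopologicalSpace N] [ChartedSpace H N]
  {E' H' : Type*} [NormedAddCommGroup E'] [NormedSpace ℝ E'] [TopologicalSpace H']
  {J : ModelWithCorners ℝ E' H'} {M : Type*} [TopologicalSpace M] [ChartedSpace H' M]

theorem dimH_extChartAt_target [FiniteDimensional ℝ E'] [J.Boundaryless] (x : M) :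
    dimH (extChartAt J x).target = finrank ℝ E' :=
  Real.dimH_of_mem_nhds (extChartAt_target_mem_nhds x)

variable [FiniteDimensional ℝ E] [I.Boundaryless] [IsManifold I 1 N] [IsManifold J 1 M]
  {g : N → M}

theorem ContMDiff.dimH_extChartAt_image_chart_le (hg : ContMDiff I J 1 g) (y : N) (x : M) :
    dimH (extChartAt J x '' (g '' (extChartAt I y).source ∩ (extChartAt J x).source))
      ≤ finrank ℝ E := by
  set e := extChartAt I y
  set ψ := extChartAt J x
  set O := e.target ∩ e.symm ⁻¹' (g ⁻¹' ψ.source)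
  have hO : IsOpen O := (continuousOn_extChartAt_symm y).isOpen_inter_preimage
    (isOpen_extChartAt_target y) ((isOpen_extChartAt_source x).preimage hg.continuous)
  have hsub : ψ '' (g '' e.source ∩ ψ.source) ⊆ (ψ ∘ g ∘ e.symm) '' O := by
    rintro _ ⟨_, ⟨⟨p, hp, rfl⟩, hgp⟩, rfl⟩
    refine ⟨e p, ⟨e.map_source hp, ?_⟩, ?_⟩
    · rwa [mem_preimage, e.left_inv hp]
    · simp only [Function.comp_apply, e.left_inv hp]
  calc dimH (ψ '' (g '' e.source ∩ ψ.source))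
      ≤ dimH ((ψ ∘ g ∘ e.symm) '' O) := dimH_mono hsub
    _ ≤ dimH O := ((contMDiff_iff.1 hg).2 y x).dimH_image_le_of_isOpen hO subset_rfl
    _ ≤ dimH (univ : Set E) := dimH_mono (subset_univ O)
    _ = finrank ℝ E := Real.dimH_univ_eq_finrank E

theorem ContMDiff.dimH_extChartAt_image_range_le [SecondCountableTopology N]
    (hg : ContMDiff I J 1 g) (x : M) :
    dimH (extChartAt J x '' (range g ∩ (extChartAt J x).source)) ≤ finrank ℝ E := by
  obtain ⟨s, hs, hcover⟩ := TopologicalSpace.countable_cover_nhds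
    (extChartAt_source_mem_nhds (I := I) (M := N))
  have hrange : range g = ⋃ y ∈ s, g '' (extChartAt I y).source := by
    rw [← image_univ, ← hcover, image_iUnion₂]
  rw [hrange, iUnion₂_inter, image_iUnion₂, dimH_bUnion hs]
  exact iSup₂_le fun y _ => hg.dimH_extChartAt_image_chart_le y x

end

theorem countable_union_of_smooth_images_ne_univ_general
    {I : Type*} [Countable I]
    {n : ℕ} {M : Type*} [TopologicalSpace M]
    [ChartedSpace (EuclideanSpace ℝ (Fin n)) M]
    [IsManifold (𝓡 n) (⊤ : ℕ∞) M]
    [Nonempty M]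
    {m : I → ℕ} {N : I → Type*}
    [∀ i, TopologicalSpace (N i)]
    [∀ i, ChartedSpace (EuclideanSpace ℝ (Fin (m i))) (N i)]
    [∀ i, IsManifold (𝓡 (m i)) (⊤ : ℕ∞) (N i)]
    [∀ i, SecondCountableTopology (N i)]
    (hdim : ∀ i, m i < n)
    (f : ∀ i, N i → M)
    (hf : ∀ i, ContMDiff (𝓡 (m i)) (𝓡 n) (⊤ : ℕ∞) (f i)) :
    (⋃ i, Set.range (f i)) ≠ Set.univ := by
  intro hcover
  obtain ⟨x⟩ := ‹Nonempty M›
  have hx : x ∈ ⋃ i, range (f i) := hcover ▸ mem_univ x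
  -- `I` is nonempty, so `0 < n` and the truncated `n - 1` below is honest
  obtain ⟨i₀, -⟩ := mem_iUnion.1 hx
  have hn : 0 < n := (Nat.zero_le _).trans_lt (hdim i₀)
  set ψ := extChartAt (𝓡 n) x
  have hpiece : ∀ i, dimH (ψ '' (range (f i) ∩ ψ.source)) ≤ (n - 1 : ℕ) := fun i => by
    refine ((hf i).of_le (by exact_mod_cast le_top) |>.dimH_extChartAt_image_range_le x).trans ?_
    rw [finrank_euclideanSpace_fin]
    exact Nat.cast_le.2 (Nat.le_sub_one_of_lt (hdim i))
  have hle : (n : ℝ≥0∞) ≤ (n - 1 : ℕ) := calc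
    (n : ℝ≥0∞) = dimH ψ.target := by rw [dimH_extChartAt_target, finrank_euclideanSpace_fin]
    _ = dimH (⋃ i, ψ '' (range (f i) ∩ ψ.source)) := by
      rw [← image_iUnion, ← iUnion_inter, hcover, univ_inter, ψ.image_source_eq_target]
    _ ≤ (n - 1 : ℕ) := (dimH_iUnion _).trans_le (iSup_le hpiece)
  exact absurd (Nat.cast_le.1 hle) (by omega)

/-- A countable union of images of smooth maps from manifolds of
strictly smaller dimension cannot cover a (nonempty) smooth manifold. -/
theorem countable_union_of_smooth_images_ne_univ
    {I : Type*} [Countable I]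
    {n : ℕ} {M : Type*} [TopologicalSpace M]
    [ChartedSpace (EuclideanSpace ℝ (Fin n)) M]
    [IsManifold (𝓡 n) (⊤ : ℕ∞) M]
    [T2Space M] [SecondCountableTopology M] [Nonempty M]
    {m : I → ℕ} {N : I → Type*}
    [∀ i, TopologicalSpace (N i)]
    [∀ i, ChartedSpace (EuclideanSpace ℝ (Fin (m i))) (N i)]
    [∀ i, IsManifold (𝓡 (m i)) (⊤ : ℕ∞) (N i)]
    [∀ i, T2Space (N i)] [∀ i, SecondCountableTopology (N i)]
    (hdim : ∀ i, m i < n)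
    (f : ∀ i, N i → M)
    (hf : ∀ i, ContMDiff (𝓡 (m i)) (𝓡 n) (⊤ : ℕ∞) (f i)) :
    (⋃ i, Set.range (f i)) ≠ Set.univ :=
  countable_union_of_smooth_images_ne_univ_general hdim f hf
end

section
/- Let M be a smooth manifold and f : N → M a smooth map from a smooth manifold N with dim(N) < dim(M). Then the image f(N) has measure zero in M (with respect to any smooth measure / in every chart). -/
/-!
In a chart of `N` the map becomes a differentiable map `g : ℝᵏ → ℝⁿ`. Choosing a linear
embedding `ι : ℝᵏ → ℝⁿ` with a linear left inverse `π`, the image of `g` is the image of the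
proper subspace `range ι` under the differentiable map `g ∘ π : ℝⁿ → ℝⁿ`, and differentiable
self-maps of `ℝⁿ` preserve Lebesgue-null sets. Countably many charts cover `N`.
-/

open Set Manifold MeasureTheory

open Module

section

variable {E F : Type*} [NormedAddCommGroup E] [NormedSpace ℝ E] [FiniteDimensional ℝ E]
  [NormedAddCommGroup F] [NormedSpace ℝ F] [FiniteDimensional ℝ F] [MeasurableSpace F]
  [BorelSpace F] (μ : Measure F) [μ.IsAddHaarMeasure]

theorem addHaar_image_eq_zero_of_differentiableOn_of_finrank_lt
    (hdim : finrank ℝ E < finrank ℝ F) {f : E → F} {s : Set E}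
    (hf : DifferentiableOn ℝ f s) : μ (f '' s) = 0 := by
  obtain ⟨ι, hι⟩ := (finrank_le_iff_exists_linearMap (R := ℝ)).mp hdim.le
  obtain ⟨π, hπι⟩ := ι.exists_leftInverse_of_injective (LinearMap.ker_eq_bot.mpr hι)
  have hπι' : ∀ x, π (ι x) = x := LinearMap.congr_fun hπι
  have hrange : LinearMap.range ι ≠ ⊤ := fun htop => by
    have := LinearMap.finrank_range_of_inj hι
    rw [htop, finrank_top] at this
    omega
  have hnull : μ (ι '' s) = 0 :=
    measure_mono_null (image_subset_range _ _) (Measure.addHaar_submodule μ _ hrange)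
  have himage : f '' s = (f ∘ π) '' (ι '' s) := by
    rw [image_image]; simp only [Function.comp_apply, hπι']
  have hdiff : DifferentiableOn ℝ (f ∘ π) (ι '' s) :=
    hf.comp (LinearMap.toContinuousLinearMap π).differentiableOn
      (by rintro _ ⟨x, hx, rfl⟩; simpa [hπι'] using hx)
  rw [himage]
  exact addHaar_image_eq_zero_of_differentiableOn_of_addHaar_eq_zero μ hdiff hnull

namespace MDifferentiableOn

variable {N : Type*} [TopologicalSpace N] [ChartedSpace E N] [IsManifold 𝓘(ℝ, E) 1 N]
  {g : N → F} {s : Set N}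

theorem addHaar_image_inter_chart_source_eq_zero (hdim : finrank ℝ E < finrank ℝ F)
    (hg : MDifferentiableOn 𝓘(ℝ, E) 𝓘(ℝ, F) g s) (x : N) :
    μ (g '' (s ∩ (chartAt E x).source)) = 0 := by
  set c := chartAt E x
  have himage : g '' (s ∩ c.source) = (g ∘ c.symm) '' (c '' (s ∩ c.source)) := by
    rw [image_image]
    exact image_congr fun y hy => by simp only [Function.comp_apply, c.left_inv hy.2]
  have hdiff : DifferentiableOn ℝ (g ∘ c.symm) (c '' (s ∩ c.source)) := by
    refine (hg.comp ((mdifferentiableOn_atlas_symm (chart_mem_atlas E x)).mono ?_) ?_)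
      |>.differentiableOn
    · exact c.image_source_eq_target ▸ image_mono inter_subset_right
    · rintro _ ⟨y, hy, rfl⟩
      rw [mem_preimage, c.left_inv hy.2]; exact hy.1
  rw [himage]
  exact addHaar_image_eq_zero_of_differentiableOn_of_finrank_lt μ hdim hdiff

theorem addHaar_image_eq_zero_of_finrank_lt [SecondCountableTopology N]
    (hdim : finrank ℝ E < finrank ℝ F) (hg : MDifferentiableOn 𝓘(ℝ, E) 𝓘(ℝ, F) g s) :
    μ (g '' s) = 0 := by
  obtain ⟨T, hT, hcover⟩ := TopologicalSpace.countable_cover_nhds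
    fun x : N => (chartAt E x).open_source.mem_nhds (mem_chart_source E x)
  have hsub : g '' s ⊆ ⋃ x ∈ T, g '' (s ∩ (chartAt E x).source) := by
    rw [← image_iUnion₂, ← inter_iUnion₂, hcover, inter_univ]
  exact measure_mono_null hsub <| (measure_biUnion_null_iff hT).mpr fun x _ =>
    hg.addHaar_image_inter_chart_source_eq_zero μ hdim x

end MDifferentiableOn

end

theorem image_of_smooth_map_from_lower_dim_measure_zero_general
    {n : ℕ} {M : Type*} [TopologicalSpace M]
    [ChartedSpace (EuclideanSpace ℝ (Fin n)) M]
    [IsManifold (𝓡 n) (⊤ : ℕ∞) M]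
    {k : ℕ} {N : Type*} [TopologicalSpace N]
    [ChartedSpace (EuclideanSpace ℝ (Fin k)) N]
    [IsManifold (𝓡 k) (⊤ : ℕ∞) N]
    [SecondCountableTopology N]
    (hdim : k < n)
    (f : N → M) (hf : ContMDiff (𝓡 k) (𝓡 n) (⊤ : ℕ∞) f) :
    ∀ e ∈ atlas (EuclideanSpace ℝ (Fin n)) M,
      MeasureTheory.volume (e '' (Set.range f ∩ e.source)) = 0 := by
  intro e he
  have himage : e '' (range f ∩ e.source) = (e ∘ f) '' (f ⁻¹' e.source) := by
    rw [inter_comm, ← image_preimage_eq_inter_range, image_comp]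
  have hdiff : MDifferentiableOn (𝓡 k) (𝓡 n) (e ∘ f) (f ⁻¹' e.source) :=
    (mdifferentiableOn_atlas he).comp (hf.mdifferentiable (by simp)).mdifferentiableOn
      fun _ hx => hx
  rw [himage]
  exact hdiff.addHaar_image_eq_zero_of_finrank_lt volume (by simpa using hdim)

/-- The image of a smooth map from a manifold of strictly smaller
dimension has measure zero in every chart of the target manifold. -/
theorem image_of_smooth_map_from_lower_dim_measure_zero
    {n : ℕ} {M : Type*} [TopologicalSpace M]
    [ChartedSpace (EuclideanSpace ℝ (Fin n)) M]
    [IsManifold (𝓡 n) (⊤ : ℕ∞) M]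
    [T2Space M] [SecondCountableTopology M]
    {k : ℕ} {N : Type*} [TopologicalSpace N]
    [ChartedSpace (EuclideanSpace ℝ (Fin k)) N]
    [IsManifold (𝓡 k) (⊤ : ℕ∞) N]
    [T2Space N] [SecondCountableTopology N]
    (hdim : k < n)
    (f : N → M) (hf : ContMDiff (𝓡 k) (𝓡 n) (⊤ : ℕ∞) f) :
    ∀ e ∈ atlas (EuclideanSpace ℝ (Fin n)) M,
      MeasureTheory.volume (e '' (Set.range f ∩ e.source)) = 0 :=
  image_of_smooth_map_from_lower_dim_measure_zero_general hdim f hf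
end

section
/- Let V be a finite-dimensional real inner product space and let S ⊂ V be a full compact submanifold (not contained in any proper affine subspace) such that S is contained in a sphere centered at the origin of radius r > 0. If ξ is a normal vector field on S that is constant as a V-valued map, then ξ = 0. -/
/-! Along every curve in `S` the function `⟪c, ·⟫` has derivative `⟪c, γ'⟫ = 0`, so it is constant
on `S`. Then `c` is orthogonal to every difference of points of `S`, hence to their span, which
is all of `V` because `S` is full. -/

open scoped RealInnerProductSpace

section InnerProductSpace

variable {V : Type*} [NormedAddCommGroup V] [InnerProductSpace ℝ V]

theorem inner_comp_eq_of_inner_deriv_eq_zero {γ : ℝ → V} (hγ : Differentiable ℝ γ) {c : V}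
    (hc : ∀ t, ⟪c, deriv γ t⟫ = 0) (a b : ℝ) : ⟪c, γ a⟫ = ⟪c, γ b⟫ := by
  have hderiv : ∀ t, deriv (fun t => ⟪c, γ t⟫) t = 0 := fun t => by
    rw [((hasDerivAt_const t c).inner ℝ (hγ t).hasDerivAt).deriv, inner_zero_left, add_zero, hc t]
  exact is_const_of_deriv_eq_zero ((innerSL ℝ c).differentiable.comp hγ) hderiv a b

theorem vectorSpan_le_orthogonal_singleton_of_inner_eq {S : Set V} {c : V}
    (hc : ∀ q ∈ S, ∀ q' ∈ S, ⟪c, q⟫ = ⟪c, q'⟫) : vectorSpan ℝ S ≤ (ℝ ∙ c)ᗮ := by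
  refine Submodule.span_le.2 ?_
  rintro _ ⟨q, hq, q', hq', rfl⟩
  rw [SetLike.mem_coe, Submodule.mem_orthogonal_singleton_iff_inner_right]
  change ⟪c, q - q'⟫ = 0
  rw [inner_sub_right, hc q hq q' hq', sub_self]

theorem eq_zero_of_inner_eq_of_affineSpan_eq_top {S : Set V} (hS : affineSpan ℝ S = ⊤) {c : V}
    (hc : ∀ q ∈ S, ∀ q' ∈ S, ⟪c, q⟫ = ⟪c, q'⟫) : c = 0 := by
  have h := vectorSpan_le_orthogonal_singleton_of_inner_eq hc
  rwa [AffineSubspace.vectorSpan_eq_top_of_affineSpan_eq_top ℝ V V hS, top_le_iff,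
    Submodule.orthogonal_eq_top_iff, Submodule.span_singleton_eq_bot] at h

end InnerProductSpace

theorem constant_normal_field_on_full_submanifold_vanishes_general
    {V : Type*} [NormedAddCommGroup V] [InnerProductSpace ℝ V]
    (S : Set V)
    (hfull : affineSpan ℝ S = ⊤)
    (hpathconn : ∀ q ∈ S, ∀ q' ∈ S, ∃ γ : ℝ → V,
      Differentiable ℝ γ ∧ (∀ t, γ t ∈ S) ∧ γ 0 = q ∧ γ 1 = q')
    (c : V)
    (hnormal : ∀ γ : ℝ → V, Differentiable ℝ γ → (∀ t, γ t ∈ S) →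
      ∀ t, ⟪c, deriv γ t⟫ = 0) :
    c = 0 := by
  refine eq_zero_of_inner_eq_of_affineSpan_eq_top hfull fun q hq q' hq' => ?_
  obtain ⟨γ, hγ, hγS, rfl, rfl⟩ := hpathconn q hq q' hq'
  exact inner_comp_eq_of_inner_deriv_eq_zero hγ (hnormal γ hγ hγS) 0 1

/-- A constant normal vector field on a full compact (connected,
smoothly path-connected) submanifold `S` of a Euclidean space `V` contained in a
sphere around the origin must vanish. Normality of the constant vector `c` is
expressed by orthogonality to the velocity of every differentiable curve in `S`. -/
theorem constant_normal_field_on_full_submanifold_vanishes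
    {V : Type*} [NormedAddCommGroup V] [InnerProductSpace ℝ V]
    [FiniteDimensional ℝ V]
    (S : Set V) (hScompact : IsCompact S) (hSconn : IsConnected S)
    (r : ℝ) (hr : 0 < r) (hsphere : S ⊆ Metric.sphere (0 : V) r)
    (hfull : affineSpan ℝ S = ⊤)
    (hpathconn : ∀ q ∈ S, ∀ q' ∈ S, ∃ γ : ℝ → V,
      Differentiable ℝ γ ∧ (∀ t, γ t ∈ S) ∧ γ 0 = q ∧ γ 1 = q')
    (c : V)
    (hnormal : ∀ γ : ℝ → V, Differentiable ℝ γ → (∀ t, γ t ∈ S) →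
      ∀ t, ⟪c, deriv γ t⟫ = 0) :
    c = 0 :=
  constant_normal_field_on_full_submanifold_vanishes_general S hfull hpathconn c hnormal
end
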